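/- Let A = [[1, -b], [0, a]] in PGL₂(𝔽_q) of order n > 1 and α ∈ 𝔽_q with A⁻¹·α ≠ α. With α₁ = α and α_{i+1} = A⁻¹·α_i = aα_i + b, the elements α₁, …, α_n are pairwise distinct. -/
import Mathlib


open Matrix Finset

/-- Let `A = [[1, -b], [0, a]] ∈ PGL₂(𝔽_q)` have order `n > 1` and `α ∈ 𝔽_q` with
`A⁻¹·α = aα + b ≠ α`. With `α_1 = α` and `α_{i+1} = a α_i + b`, the elements
`α_1, …, α_n` are pairwise distinct. -/
theorem stmt_3 {F : Type*} [Field F] [Fintype F] (a b : F) (n : ℕ) (hn : 1 < n)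
    (A : GL (Fin 2) F) (hA : (A : Matrix (Fin 2) (Fin 2) F) = !![1, -b; 0, a])
    (hord : orderOf (QuotientGroup.mk A :
        GL (Fin 2) F ⧸ Subgroup.center (GL (Fin 2) F)) = n)
    (α : F) (hα : a * α + b ≠ α)
    (f : ℕ → F) (hf1 : f 1 = α) (hfs : ∀ i, 1 ≤ i → f (i + 1) = a * f i + b) :
    ∀ i j, 1 ≤ i → i ≤ n → 1 ≤ j → j ≤ n → f i = f j → i = j := by
  have ha0 : a ≠ 0 := by
    have h1 : IsUnit (A : Matrix (Fin 2) (Fin 2) F) := A.isUnit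
    rw [Matrix.isUnit_iff_isUnit_det, hA, Matrix.det_fin_two_of] at h1
    simpa [isUnit_iff_ne_zero] using h1
  set g : F → F := fun x => a * x + b with hg
  have hginj : Function.Injective g := by
    intro x y hxy
    simp only [hg] at hxy
    exact mul_left_cancel₀ ha0 (add_right_cancel hxy)
  have hiter : ∀ m, f (1 + m) = g^[m] α := by
    intro m
    induction m with
    | zero => simpa using hf1
    | succ k ih =>
      have h2 : f (1 + (k + 1)) = a * f (1 + k) + b := by
        have := hfs (1 + k) (by omega)
        simpa [add_assoc] using this
      rw [h2, ih, Function.iterate_succ_apply']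
  have hform : ∀ m, g^[m] α = a ^ m * α + b * ∑ i ∈ Finset.range m, a ^ i := by
    intro m
    induction m with
    | zero => simp
    | succ k ih =>
      rw [Function.iterate_succ_apply', ih]
      simp only [hg, geom_sum_succ]
      ring
  have hMp : ∀ m, (A : Matrix (Fin 2) (Fin 2) F) ^ m
      = !![1, -(b * ∑ i ∈ Finset.range m, a ^ i); 0, a ^ m] := by
    intro m
    induction m with
    | zero => simp [Matrix.one_fin_two]
    | succ k ih =>
      rw [pow_succ, ih, hA, Matrix.mul_fin_two]
      ext i j
      fin_cases i <;> fin_cases j <;> simp [geom_sum_succ] <;> ring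
  suffices key : ∀ i j, 1 ≤ i → j ≤ n → i ≤ j → f i = f j → i = j by
    intro i j hi hin hj hjn heq
    rcases le_total i j with h | h
    · exact key i j hi hjn h heq
    · exact (key j i hj hin h heq.symm).symm
  intro i j hi hjn hij heq
  by_contra hne
  set p := i - 1 with hp
  set q := j - 1 with hq
  set d := q - p with hd
  have hdpos : 1 ≤ d := by omega
  have hdlt : d < n := by omega
  have hiq : i = 1 + p := by omega
  have hjq : j = 1 + q := by omega
  have hqpd : q = p + d := by omega
  rw [hiq, hjq, hiter, hiter, hqpd, Function.iterate_add_apply] at heq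
  have hfix : g^[d] α = α := ((hginj.iterate p) heq).symm
  have heq2 : a ^ d * α + b * ∑ i ∈ Finset.range d, a ^ i = α := by
    rw [← hform, hfix]
  by_cases h1 : a ^ d = 1
  · -- then b * S = 0 and A^d = 1, contradicting the order
    have hS : b * ∑ i ∈ Finset.range d, a ^ i = 0 := by
      rw [h1, one_mul] at heq2
      linear_combination heq2
    have hA1 : (A : Matrix (Fin 2) (Fin 2) F) ^ d = 1 := by
      rw [hMp d, hS, h1, neg_zero, ← Matrix.one_fin_two]
    have hAu : A ^ d = 1 := by
      apply Units.ext
      rw [Units.val_pow_eq_pow_val, hA1, Units.val_one]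
    have hmk : (QuotientGroup.mk A :
        GL (Fin 2) F ⧸ Subgroup.center (GL (Fin 2) F)) ^ d = 1 := by
      rw [← QuotientGroup.mk_pow, hAu, QuotientGroup.mk_one]
    have hdvd : n ∣ d := hord ▸ orderOf_dvd_of_pow_eq_one hmk
    have := Nat.le_of_dvd (by omega) hdvd
    omega
  · -- then α is the fixed point of g, contradiction
    have hg2 : (∑ i ∈ Finset.range d, a ^ i) * (a - 1) = a ^ d - 1 := geom_sum_mul a d
    have hfact : (a ^ d - 1) * ((a - 1) * α + b) = 0 := by
      linear_combination (a - 1) * heq2 - b * hg2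
    have h2 : (a - 1) * α + b = 0 := by
      rcases mul_eq_zero.mp hfact with h | h
      · exact absurd (sub_eq_zero.mp h) h1
      · exact h
    exact hα (by linear_combination h2)
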